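/- Let u_ε=(ε/(λn))^{1/q} and s*_i=min{u_ε, |x*_i|^{1/(q−1)}}. Suppose x* satisfies 0 ∈ ∂f/∂x_i(x*)+λp s*_i·sgn(x*_i) for all i (where sgn(0)=[−1,1]), f has L_f-Lipschitz gradient with infimum f̲, F(x*) ≤ F(x⁰)+ε, and 0<ε< nλ[√(2L_f(F(x⁰)+ε−f̲))/(λp)]^q. Then every nonzero x*_i satisfies |x*_i| > u_ε^{q−1}, and hence ∂f/∂x_i(x*)+λp|x*_i|^{p−1}sgn(x*_i)=0 for all i with x*_i≠0, i.e. x* is a first-order stationary point of F(x)=f(x)+λ‖x‖_p^p. -/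

import Mathlib

/-!
A gradient step of length `1 / L_f` lowers `f` by at least `‖∇f(x)‖² / (2 L_f)` (descent lemma),
so `‖∇f(x*)‖ ≤ √(2 L_f (f(x*) - f̲)) ≤ √(2 L_f (F(x⁰) + ε - f̲))`, and the bound on `ε` makes
this smaller than `λ p u_ε`. At a nonzero entry the inclusion reads `|∂ᵢf(x*)| = λ p s*ᵢ`, so
`s*ᵢ < u_ε`: the minimum is `|x*ᵢ|^(1/(q-1)) = |x*ᵢ|^(p-1)`, and `|x*ᵢ| > u_ε^(q-1)` because
`q - 1 < 0`.
-/

open RealInnerProductSpace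

noncomputable def sgnSet (t : ℝ) : Set ℝ :=
  if 0 < t then {1} else if t < 0 then {-1} else Set.Icc (-1) 1

section LipschitzGradient

variable {E : Type*} [NormedAddCommGroup E] [InnerProductSpace ℝ E] [CompleteSpace E]
  {f : E → ℝ} {L : ℝ}

theorem le_add_inner_gradient_add_sq_of_lipschitz (hf : Differentiable ℝ f)
    (hlip : ∀ a b, ‖gradient f a - gradient f b‖ ≤ L * ‖a - b‖) (x v : E) :
    f (x + v) ≤ f x + ⟪gradient f x, v⟫ + L / 2 * ‖v‖ ^ 2 := by
  set φ : ℝ → ℝ := fun t => f (x + t • v) - t * ⟪gradient f x, v⟫ - L / 2 * t ^ 2 * ‖v‖ ^ 2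
  set φ' : ℝ → ℝ := fun t =>
    ⟪gradient f (x + t • v), v⟫ - ⟪gradient f x, v⟫ - L * t * ‖v‖ ^ 2
  have hderiv : ∀ t, HasDerivAt φ (φ' t) t := by
    intro t
    have hline : HasDerivAt (fun s : ℝ => x + s • v) v t := by
      simpa using ((hasDerivAt_id t).smul_const v).const_add x
    have hcomp := (hf (x + t • v)).hasFDerivAt.comp_hasDerivAt t hline
    rw [← inner_gradient_left] at hcomp
    refine ((hcomp.sub ((hasDerivAt_id t).mul_const ⟪gradient f x, v⟫)).sub
      (((hasDerivAt_pow 2 t).const_mul (L / 2)).mul_const (‖v‖ ^ 2))).congr_deriv ?_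
    simp only [φ']
    push_cast
    ring
  have hnonpos : ∀ t ∈ interior (Set.Ici (0 : ℝ)), φ' t ≤ 0 := by
    intro t ht
    rw [interior_Ici, Set.mem_Ioi] at ht
    have hcs := real_inner_le_norm (gradient f (x + t • v) - gradient f x) v
    have hL := hlip (x + t • v) x
    rw [add_sub_cancel_left, norm_smul, Real.norm_of_nonneg ht.le] at hL
    simp only [φ', ← inner_sub_left]
    nlinarith [norm_nonneg v]
  have hanti : AntitoneOn φ (Set.Ici 0) :=
    antitoneOn_of_hasDerivWithinAt_nonpos (convex_Ici 0)
      (fun t _ => (hderiv t).continuousAt.continuousWithinAt)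
      (fun t _ => (hderiv t).hasDerivWithinAt) hnonpos
  have h10 := hanti (Set.self_mem_Ici) (Set.mem_Ici.2 zero_le_one) zero_le_one
  simp only [φ, zero_smul, one_smul, add_zero] at h10
  linarith

theorem norm_gradient_le_sqrt_of_lipschitz (hf : Differentiable ℝ f)
    (hlip : ∀ a b, ‖gradient f a - gradient f b‖ ≤ L * ‖a - b‖) (hL : 0 < L) {m : ℝ}
    (hm : m ∈ lowerBounds (Set.range f)) (x : E) :
    ‖gradient f x‖ ≤ √(2 * L * (f x - m)) := by
  have hstep := le_add_inner_gradient_add_sq_of_lipschitz hf hlip x (-(1 / L) • gradient f x)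
  rw [inner_smul_right, real_inner_self_eq_norm_sq, norm_smul, mul_pow, Real.norm_eq_abs,
    sq_abs] at hstep
  have hlow : m ≤ f (x + -(1 / L) • gradient f x) := hm (Set.mem_range_self _)
  rw [← abs_norm]
  apply Real.abs_le_sqrt
  have : f x - ‖gradient f x‖ ^ 2 / (2 * L) = f x + -(1 / L) * ‖gradient f x‖ ^ 2 +
      L / 2 * ((-(1 / L)) ^ 2 * ‖gradient f x‖ ^ 2) := by
    field_simp
    ring
  have h2 : ‖gradient f x‖ ^ 2 / (2 * L) ≤ f x - m := by linarith
  rwa [div_le_iff₀ (by positivity), mul_comm] at h2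

end LipschitzGradient

theorem EuclideanSpace.abs_fderiv_single_le_norm_gradient {ι : Type*} [Fintype ι]
    [DecidableEq ι] (f : EuclideanSpace ℝ ι → ℝ) (x : EuclideanSpace ℝ ι) (i : ι) :
    |fderiv ℝ f x (EuclideanSpace.single i 1)| ≤ ‖gradient f x‖ := by
  rw [← inner_gradient_left, EuclideanSpace.inner_single_right, one_mul]
  exact PiLp.norm_apply_le (gradient f x) i

theorem sgnSet_of_ne_zero {t : ℝ} (ht : t ≠ 0) : sgnSet t = {Real.sign t} := by
  rcases ht.lt_or_gt with h | h
  · simp [sgnSet, h, h.not_gt, Real.sign_of_neg h]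
  · simp [sgnSet, h, Real.sign_of_pos h]

theorem abs_sign_of_ne_zero {t : ℝ} (ht : t ≠ 0) : |Real.sign t| = 1 := by
  rcases Real.sign_apply_eq_of_ne_zero t ht with h | h <;> simp [h]

theorem lt_of_add_mul_min_mul_eq_zero {a c u s g : ℝ} (hc : 0 < c) (hu : 0 < u) (hg : |g| = 1)
    (ha : |a| < c * u) (h : a + c * min u s * g = 0) : s < u := by
  by_contra! hle
  rw [min_eq_left hle, add_eq_zero_iff_eq_neg] at h
  rw [h, abs_neg, abs_mul, hg, mul_one, abs_of_pos (by positivity)] at ha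
  exact lt_irrefl _ ha

section ConjugateExponent

variable {p q : ℝ}

theorem neg_of_one_div_add_one_div_eq_one (hp : 0 < p) (hp1 : p < 1) (hq : 1 / p + 1 / q = 1) :
    q < 0 := by
  have : 1 < 1 / p := by rw [lt_div_iff₀ hp]; linarith
  exact one_div_neg.1 (by linarith)

theorem one_div_sub_one_eq_of_one_div_add_one_div_eq_one (hp : 0 < p) (hp1 : p < 1)
    (hq : 1 / p + 1 / q = 1) : 1 / (q - 1) = p - 1 := by
  have hq0 := neg_of_one_div_add_one_div_eq_one hp hp1 hq
  have hpq : p * q = p + q := by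
    calc p * q = p * q * (1 / p + 1 / q) := by rw [hq, mul_one]
      _ = p + q := by field_simp [hp.ne', hq0.ne]; ring
  rw [div_eq_iff (by linarith)]
  linarith

end ConjugateExponent

/-- If ε is below the threshold, a stationary point x* of the ε-approximation with
F(x*) ≤ F(x⁰)+ε satisfies |x*_i| > u_ε^(q-1) for all nonzero entries and is a
first-order stationary point of F(x) = f(x) + λ‖x‖_p^p. -/
theorem stmt_17 (n : ℕ) (hn : 1 ≤ n) (p q lam Lf eps fbar : ℝ) (hp : 0 < p)
    (hp1 : p < 1) (hq : 1 / p + 1 / q = 1) (hlam : 0 < lam) (hLf : 0 < Lf)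
    (f : EuclideanSpace ℝ (Fin n) → ℝ) (hf : Differentiable ℝ f)
    (hlip : ∀ a b : EuclideanSpace ℝ (Fin n), ‖gradient f a - gradient f b‖ ≤ Lf * ‖a - b‖)
    (hinf : IsGLB (Set.range f) fbar)
    (x x0 : EuclideanSpace ℝ (Fin n))
    (hstat : ∀ i, ∃ g ∈ sgnSet (x i),
      fderiv ℝ f x (EuclideanSpace.single i 1) +
        lam * p * min ((eps / (lam * n)) ^ (1 / q)) (|x i| ^ (1 / (q - 1))) * g = 0)
    (hF : f x + lam * ∑ i, |x i| ^ p ≤ f x0 + lam * (∑ i, |x0 i| ^ p) + eps)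
    (heps : 0 < eps)
    (heps2 : eps < n * lam *
      (Real.sqrt (2 * Lf * (f x0 + lam * (∑ i, |x0 i| ^ p) + eps - fbar)) / (lam * p)) ^ q) :
    (∀ i, x i ≠ 0 → ((eps / (lam * n)) ^ (1 / q)) ^ (q - 1) < |x i|) ∧
      (∀ i, x i ≠ 0 →
        fderiv ℝ f x (EuclideanSpace.single i 1) +
          lam * p * |x i| ^ (p - 1) * Real.sign (x i) = 0) := by
  have hq0 := neg_of_one_div_add_one_div_eq_one hp hp1 hq
  have hn0 : (0 : ℝ) < n := by exact_mod_cast hn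
  have hu : 0 < (eps / (lam * n)) ^ (1 / q) := by positivity
  set u := (eps / (lam * n)) ^ (1 / q)
  set F0 := f x0 + lam * (∑ i, |x0 i| ^ p)
  have hgrad : ∀ i, |fderiv ℝ f x (EuclideanSpace.single i 1)| < lam * p * u := by
    intro i
    have hfx : f x ≤ F0 + eps := by
      have : 0 ≤ lam * ∑ i, |x i| ^ p := by positivity
      linarith
    have hgap : 0 < F0 + eps - fbar := by
      have : fbar ≤ f x0 := hinf.1 (Set.mem_range_self x0)
      have : 0 ≤ lam * ∑ i, |x0 i| ^ p := by positivity
      linarith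
    have hthreshold : √(2 * Lf * (F0 + eps - fbar)) / (lam * p) < u := by
      change _ < (eps / (lam * n)) ^ (1 / q)
      rw [one_div, Real.lt_rpow_inv_iff_of_neg (by positivity) (by positivity) hq0,
        div_lt_iff₀ (by positivity)]
      linarith
    calc |fderiv ℝ f x (EuclideanSpace.single i 1)| ≤ ‖gradient f x‖ :=
          EuclideanSpace.abs_fderiv_single_le_norm_gradient f x i
      _ ≤ √(2 * Lf * (f x - fbar)) := norm_gradient_le_sqrt_of_lipschitz hf hlip hLf hinf.1 x
      _ ≤ √(2 * Lf * (F0 + eps - fbar)) := by gcongr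
      _ < lam * p * u := by rwa [div_lt_iff₀' (by positivity)] at hthreshold
  have hsmall : ∀ i, x i ≠ 0 → |x i| ^ (1 / (q - 1)) < u := by
    intro i hi
    obtain ⟨g, hg, hzero⟩ := hstat i
    rw [sgnSet_of_ne_zero hi, Set.mem_singleton_iff] at hg
    exact lt_of_add_mul_min_mul_eq_zero (by positivity) hu (hg ▸ abs_sign_of_ne_zero hi)
      (hgrad i) hzero
  refine ⟨fun i hi => ?_, fun i hi => ?_⟩
  · rw [← Real.rpow_inv_lt_iff_of_neg (abs_pos.2 hi) hu (by linarith), ← one_div]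
    exact hsmall i hi
  · obtain ⟨g, hg, hzero⟩ := hstat i
    rw [sgnSet_of_ne_zero hi, Set.mem_singleton_iff] at hg
    rwa [min_eq_right (hsmall i hi).le, one_div_sub_one_eq_of_one_div_add_one_div_eq_one hp hp1 hq,
      hg] at hzero
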